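/- arXiv:2109.13289 — 4 statements merged into one kernel-verified Lean document; each statement's English description precedes it below -/
import Mathlib

section
/- Let Δ be an ADE root system, I ⊆ Δ, and π_I the linear quotient map killing the simple roots α_i with i ∈ I. If α and α' are positive roots with π_I(α) = π_I(α') ≠ 0, and some element w of the parabolic subgroup W_I maps the hyperplane α^⊥ to (α')^⊥, then some element of W_I maps α to α' (not to −α'). -/
/-
Reflections preserve `B`, so `w` maps `α^⊥` onto `(w α)^⊥`; hence `(w α)^⊥ = (α')^⊥`, and if `B`
is nondegenerate then `w α = c • α'`, with `c = ±1` because the root system is reduced. Elements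
of `W_I` do not change the coordinates outside `I`, where `α = α'` is nonzero, so `c = 1` and `w`
itself maps `α` to `α'`.

Nondegeneracy comes from finiteness: `W` permutes the finite set `Φ`, which contains a basis, so
`W` is finite and averaging the dot product over `W` gives a `W`-invariant inner product. A vector
in the radical of `B` is fixed by every `sᵢ`, and `sᵢ αᵢ = -αᵢ`, so it is orthogonal to every `αᵢ`
for that inner product, hence zero.
-/

open Set Pointwise

namespace LinearMap.BilinForm

variable {K V : Type*} [Field K] [AddCommGroup V] [Module K V] {B : LinearMap.BilinForm K V}

def isometryGroup (B : LinearMap.BilinForm K V) : Subgroup (V ≃ₗ[K] V) where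
  carrier := {g | ∀ x y, B (g x) (g y) = B x y}
  mul_mem' {g h} hg hh x y := (hg (h x) (h y)).trans (hh x y)
  one_mem' _ _ := rfl
  inv_mem' {g} hg x y := by simpa using (hg (g⁻¹ x) (g⁻¹ y)).symm

lemma ker_le_ker_of_image_eq {g : V ≃ₗ[K] V} (hg : g ∈ B.isometryGroup) {a b : V}
    (h : g '' {x | B a x = 0} = {x | B b x = 0}) :
    LinearMap.ker (B b) ≤ LinearMap.ker (B (g a)) := fun x hx => by
  obtain ⟨z, hz, rfl⟩ : x ∈ g '' {x | B a x = 0} := h ▸ hx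
  exact (hg a z).trans hz

lemma _root_.LinearMap.SeparatingLeft.exists_eq_smul_of_ker_le (hB : B.SeparatingLeft) {u v : V}
    (h : LinearMap.ker (B u) ≤ LinearMap.ker (B v)) : ∃ c : K, v = c • u := by
  have hspan : B v ∈ Submodule.span K (Set.range fun _ : Unit => B u) :=
    mem_span_of_iInf_ker_le_ker (L := fun _ => B u) (by rwa [iInf_const])
  rw [Set.range_const] at hspan
  obtain ⟨c, hc⟩ := Submodule.mem_span_singleton.mp hspan
  refine ⟨c, eq_of_sub_eq_zero (hB _ fun y => ?_)⟩
  simp [← hc]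

def IsReflection (B : LinearMap.BilinForm K V) (a : V) (r : V ≃ₗ[K] V) : Prop :=
  ∀ x, r x = x - (2 * B x a / B a a) • a

namespace IsReflection

variable {a : V} {r : V ≃ₗ[K] V}

lemma apply_self (hr : B.IsReflection a r) (ha : B a a ≠ 0) : r a = -a := by
  rw [hr, mul_div_assoc, div_self ha, mul_one, two_smul]
  abel

lemma apply_of_bilin_eq_zero (hr : B.IsReflection a r) {x : V} (hx : B x a = 0) : r x = x := by
  rw [hr, hx, mul_zero, zero_div, zero_smul, sub_zero]

lemma inv_eq (hr : B.IsReflection a r) (ha : B a a ≠ 0) : r⁻¹ = r := by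
  refine inv_eq_of_mul_eq_one_right (LinearEquiv.ext fun x => ?_)
  show r (r x) = x
  rw [hr (r x), hr x]
  simp only [map_sub, map_smul, LinearMap.sub_apply, LinearMap.smul_apply, smul_eq_mul]
  rw [sub_sub, ← add_smul]
  convert sub_zero x using 2
  convert zero_smul K a using 2
  field_simp
  ring

lemma mem_isometryGroup (hr : B.IsReflection a r) (ha : B a a ≠ 0)
    (hB : ∀ x y, B x y = B y x) : r ∈ B.isometryGroup := by
  intro x y
  rw [hr x, hr y]
  simp only [map_sub, map_smul, LinearMap.sub_apply, LinearMap.smul_apply, smul_eq_mul]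
  rw [hB a y]
  field_simp
  ring

end IsReflection

end LinearMap.BilinForm

section Stabilizer

lemma mem_stabilizer_of_mapsTo_of_inv_eq {G α : Type*} [Group G] [MulAction G α] {g : G}
    {Φ : Set α} (hinv : g⁻¹ = g) (h : MapsTo (g • ·) Φ Φ) : g ∈ MulAction.stabilizer G Φ := by
  refine (smul_set_subset_iff.mpr fun _ hx => h hx).antisymm fun x hx => ?_
  rw [mem_smul_set_iff_inv_smul_mem, hinv]
  exact h hx

lemma mapsTo_of_mem_stabilizer {G α : Type*} [Group G] [MulAction G α] {Φ : Set α}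
    {g : G} (hg : g ∈ MulAction.stabilizer G Φ) : MapsTo (g • ·) Φ Φ := fun _ hx => by
  rw [← MulAction.mem_stabilizer_iff.mp hg]
  exact smul_mem_smul_set hx

variable {ι K V : Type*} [Finite ι] [Field K] [AddCommGroup V] [Module K V]

lemma finite_setOf_mapsTo (b : Module.Basis ι K V) {Φ : Set V} (hΦ : Φ.Finite)
    (hb : ∀ i, b i ∈ Φ) : {g : V ≃ₗ[K] V | MapsTo g Φ Φ}.Finite :=
  Set.Finite.of_injOn (f := fun g i => g (b i)) (t := univ.pi fun _ => Φ)
    (fun _ hg i _ => hg (hb i)) (fun _ _ _ _ h => b.ext' fun i => congrFun h i)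
    (Set.Finite.pi fun _ => hΦ)

lemma finite_of_le_stabilizer (b : Module.Basis ι K V) {Φ : Set V} (hΦ : Φ.Finite)
    (hb : ∀ i, b i ∈ Φ) {G : Subgroup (V ≃ₗ[K] V)}
    (hG : G ≤ MulAction.stabilizer (V ≃ₗ[K] V) Φ) : Finite G :=
  ((finite_setOf_mapsTo b hΦ hb).subset fun _ hg => mapsTo_of_mem_stabilizer (hG hg)).to_subtype

end Stabilizer

section Coordinates

variable {Δ K : Type*} [DecidableEq Δ] [Field K]

def coordFixingSubgroup (I : Set Δ) : Subgroup ((Δ → K) ≃ₗ[K] (Δ → K)) where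
  carrier := {g | ∀ x, ∀ j ∉ I, g x j = x j}
  mul_mem' {g h} hg hh x j hj := (hg (h x) j hj).trans (hh x j hj)
  one_mem' _ _ _ := rfl
  inv_mem' {g} hg x j hj := by simpa using (hg (g⁻¹ x) j hj).symm

lemma LinearMap.BilinForm.IsReflection.mem_coordFixingSubgroup
    {B : LinearMap.BilinForm K (Δ → K)} {r : (Δ → K) ≃ₗ[K] (Δ → K)} {i : Δ} {I : Set Δ}
    (hr : B.IsReflection (Pi.single i 1) r) (hi : i ∈ I) : r ∈ coordFixingSubgroup I := by
  intro x j hj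
  rw [hr, Pi.sub_apply, Pi.smul_apply, Pi.single_eq_of_ne (ne_of_mem_of_not_mem hi hj).symm,
    smul_zero, sub_zero]

end Coordinates

section AveragedDotProduct

variable {ι : Type*} [Fintype ι] (G : Subgroup ((ι → ℝ) ≃ₗ[ℝ] (ι → ℝ))) [Fintype G]

def averagedDotProduct : LinearMap.BilinForm ℝ (ι → ℝ) :=
  ∑ g : G, (dotProductBilin ℝ ℝ).compl₁₂ g.1.toLinearMap g.1.toLinearMap

lemma averagedDotProduct_apply (x y : ι → ℝ) :
    averagedDotProduct G x y = ∑ g : G, g.1 x ⬝ᵥ g.1 y := by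
  simp [averagedDotProduct]

lemma averagedDotProduct_map {h : (ι → ℝ) ≃ₗ[ℝ] (ι → ℝ)} (hh : h ∈ G) (x y : ι → ℝ) :
    averagedDotProduct G (h x) (h y) = averagedDotProduct G x y := by
  simp only [averagedDotProduct_apply]
  exact Fintype.sum_equiv (Equiv.mulRight ⟨h, hh⟩) _ _ fun _ => rfl

lemma eq_zero_of_averagedDotProduct_self {x : ι → ℝ} (hx : averagedDotProduct G x x = 0) :
    x = 0 := by
  have hnonneg (g : G) : 0 ≤ g.1 x ⬝ᵥ g.1 x :=
    Finset.sum_nonneg fun _ _ => mul_self_nonneg _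
  rw [averagedDotProduct_apply, Finset.sum_eq_zero_iff_of_nonneg fun g _ => hnonneg g] at hx
  exact dotProduct_self_eq_zero.mp (hx 1 (Finset.mem_univ _))

end AveragedDotProduct

lemma eq_zero_of_forall_reflection_apply_eq_self {ι : Type*} [Fintype ι] [DecidableEq ι]
    (G : Subgroup ((ι → ℝ) ≃ₗ[ℝ] (ι → ℝ))) [Finite G] {r : ι → (ι → ℝ) ≃ₗ[ℝ] (ι → ℝ)}
    (hrG : ∀ i, r i ∈ G) (hr : ∀ i, r i (Pi.single i 1) = -Pi.single i 1) {x : ι → ℝ}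
    (hx : ∀ i, r i x = x) : x = 0 := by
  cases nonempty_fintype G
  have hPx : averagedDotProduct G x = 0 := (Pi.basisFun ℝ ι).ext fun i => by
    have h := averagedDotProduct_map G (hrG i) x (Pi.single i 1)
    rw [hx i, hr i, map_neg] at h
    rw [Pi.basisFun_apply, LinearMap.zero_apply]
    linarith
  exact eq_zero_of_averagedDotProduct_self G (by rw [hPx, LinearMap.zero_apply])

lemma separatingLeft_of_finite_closure {ι : Type*} [Fintype ι] [DecidableEq ι]
    {B : LinearMap.BilinForm ℝ (ι → ℝ)} {s : ι → (ι → ℝ) ≃ₗ[ℝ] (ι → ℝ)}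
    (hs : ∀ i, B.IsReflection (Pi.single i 1) (s i))
    (hBnd : ∀ i, B (Pi.single i 1) (Pi.single i 1) ≠ 0)
    [Finite (Subgroup.closure (range s))] : B.SeparatingLeft := fun _ hx =>
  eq_zero_of_forall_reflection_apply_eq_self _ (fun i => Subgroup.subset_closure (mem_range_self i))
    (fun i => (hs i).apply_self (hBnd i)) fun i => (hs i).apply_of_bilin_eq_zero (hx _)

theorem stmt1_general {Δ : Type*} [Fintype Δ] [DecidableEq Δ]
    (Φ : Set (Δ → ℝ)) (hΦfin : Φ.Finite)
    (B : LinearMap.BilinForm ℝ (Δ → ℝ))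
    (hBsymm : ∀ x y, B x y = B y x)
    (hBnd : ∀ i : Δ, B (Pi.single i 1) (Pi.single i 1) ≠ 0)
    (s : Δ → ((Δ → ℝ) ≃ₗ[ℝ] (Δ → ℝ)))
    -- sᵢ is the B-orthogonal reflection in the simple root αᵢ = Pi.single i 1
    (hrefl : ∀ i x, s i x =
      x - (2 * B x (Pi.single i 1) / B (Pi.single i 1) (Pi.single i 1)) • (Pi.single i 1 : Δ → ℝ))
    -- the simple reflections permute the (finite) set of roots
    (hperm : ∀ i, ∀ α ∈ Φ, s i α ∈ Φ)
    -- the system is reduced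
    (hreduced : ∀ α ∈ Φ, ∀ t : ℝ, t • α ∈ Φ → t = 1 ∨ t = -1)
    -- the simple roots are roots
    (hsimple : ∀ i, Pi.single i (1 : ℝ) ∈ Φ)
    (I : Set Δ)
    (α α' : Δ → ℝ) (hα : α ∈ Φ) (hα' : α' ∈ Φ)
    -- π_I(α) = π_I(α') ≠ 0
    (hproj : ∀ j, j ∉ I → α j = α' j)
    (hne : ∃ j, j ∉ I ∧ α j ≠ 0)
    (w : (Δ → ℝ) ≃ₗ[ℝ] (Δ → ℝ))
    (hw : w ∈ Subgroup.closure (s '' I))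
    -- w maps the hyperplane α^⊥ onto (α')^⊥
    (hplane : (fun x => w x) '' {x | B α x = 0} = {x | B α' x = 0}) :
    ∃ u ∈ Subgroup.closure (s '' I), u α = α' := by
  have hs : ∀ i, B.IsReflection (Pi.single i 1) (s i) := hrefl
  have hGΦ : Subgroup.closure (range s) ≤ MulAction.stabilizer _ Φ :=
    (Subgroup.closure_le _).mpr <| range_subset_iff.mpr fun i =>
      mem_stabilizer_of_mapsTo_of_inv_eq ((hs i).inv_eq (hBnd i)) (hperm i)
  have : Finite (Subgroup.closure (range s)) :=
    finite_of_le_stabilizer (Pi.basisFun ℝ Δ) hΦfin (by simpa using hsimple) hGΦ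
  have hwG : w ∈ Subgroup.closure (range s) := Subgroup.closure_mono (image_subset_range s I) hw
  have hwB : w ∈ B.isometryGroup := (Subgroup.closure_le _).mpr
    (range_subset_iff.mpr fun i => (hs i).mem_isometryGroup (hBnd i) hBsymm) hwG
  have hwI : w ∈ coordFixingSubgroup I := (Subgroup.closure_le _).mpr
    (image_subset_iff.mpr fun i hi => (hs i).mem_coordFixingSubgroup hi) hw
  obtain ⟨c, hc⟩ := (separatingLeft_of_finite_closure hs hBnd).exists_eq_smul_of_ker_le
    (B.ker_le_ker_of_image_eq hwB hplane)
  obtain ⟨j, hjI, hαj⟩ := hne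
  rcases hreduced α' hα' c (hc ▸ mapsTo_of_mem_stabilizer (hGΦ hwG) hα) with rfl | rfl
  · exact ⟨w, hw, by rw [hc, one_smul]⟩
  · have h := hwI α j hjI
    rw [hc, hproj j hjI, neg_one_smul, Pi.neg_apply, neg_eq_self, ← hproj j hjI] at h
    exact absurd h hαj

theorem stmt1 {Δ : Type*} [Fintype Δ] [DecidableEq Δ]
    (Φ : Set (Δ → ℝ)) (hΦfin : Φ.Finite)
    (B : LinearMap.BilinForm ℝ (Δ → ℝ))
    (hBsymm : ∀ x y, B x y = B y x)
    (hBnd : ∀ i : Δ, B (Pi.single i 1) (Pi.single i 1) ≠ 0)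
    (s : Δ → ((Δ → ℝ) ≃ₗ[ℝ] (Δ → ℝ)))
    -- sᵢ is the B-orthogonal reflection in the simple root αᵢ = Pi.single i 1
    (hrefl : ∀ i x, s i x =
      x - (2 * B x (Pi.single i 1) / B (Pi.single i 1) (Pi.single i 1)) • (Pi.single i 1 : Δ → ℝ))
    -- the simple reflections permute the (finite) set of roots
    (hperm : ∀ i, ∀ α ∈ Φ, s i α ∈ Φ)
    -- every root is positive or negative
    (hpm : ∀ α ∈ Φ, (∀ j, 0 ≤ α j) ∨ (∀ j, α j ≤ 0))
    -- the system is reduced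
    (hreduced : ∀ α ∈ Φ, ∀ t : ℝ, t • α ∈ Φ → t = 1 ∨ t = -1)
    -- the simple roots are roots
    (hsimple : ∀ i, Pi.single i (1 : ℝ) ∈ Φ)
    (I : Set Δ)
    (α α' : Δ → ℝ) (hα : α ∈ Φ) (hα' : α' ∈ Φ)
    (hpos : ∀ j, 0 ≤ α j) (hpos' : ∀ j, 0 ≤ α' j)
    -- π_I(α) = π_I(α') ≠ 0
    (hproj : ∀ j, j ∉ I → α j = α' j)
    (hne : ∃ j, j ∉ I ∧ α j ≠ 0)
    (w : (Δ → ℝ) ≃ₗ[ℝ] (Δ → ℝ))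
    (hw : w ∈ Subgroup.closure (s '' I))
    -- w maps the hyperplane α^⊥ onto (α')^⊥
    (hplane : (fun x => w x) '' {x | B α x = 0} = {x | B α' x = 0}) :
    ∃ u ∈ Subgroup.closure (s '' I), u α = α' :=
  stmt1_general Φ hΦfin B hBsymm hBnd s hrefl hperm hreduced hsimple I α α' hα hα' hproj hne w hw
    hplane
end

section
/- In the root system A_n, with positive roots α_{ij} = α_i + α_{i+1} + ⋯ + α_j for 1 ≤ i ≤ j ≤ n, two positive roots α_{ij} and α_{kl} satisfy π_I(α_{ij}) = π_I(α_{kl}) ≠ 0 (for a subset I of nodes) if and only if they lie in the same orbit under the parabolic subgroup W_I. -/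
/-!
STATEMENT 2: In the root system `Aₙ` with positive roots `α_{ij} = αᵢ + ⋯ + αⱼ`
(0-based indexing here, so `0 ≤ i ≤ j ≤ n-1`), two positive roots `α_{ij}` and `α_{kl}`
whose images under `π_I` are nonzero satisfy `π_I(α_{ij}) = π_I(α_{kl})` if and only if
they lie in the same orbit under the parabolic subgroup `W_I`.

Roots are written in simple-root coordinates, so `π_I` is the restriction of the
coordinates to the complement of `I`; thus `π_I(α) = π_I(α')` means the coordinates
agree outside `I`.  The parabolic subgroup `W_I` is realised as the submonoid of
`Function.End (Fin n → ℤ)` generated by the simple reflections `{sᵢ : i ∈ I}` (since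
each reflection is an involution, this submonoid coincides with the subgroup they
generate).
-/

/-- The positive root `α_{ij} = αᵢ + ⋯ + αⱼ` of `Aₙ`, in simple-root coordinates. -/
def alphaA (n : ℕ) (i j : ℕ) : Fin n → ℤ :=
  fun k => if i ≤ (k : ℕ) ∧ (k : ℕ) ≤ j then 1 else 0

/-- The simple reflection `sᵢ` of the Weyl group of `Aₙ`, acting on simple-root
coordinates. -/
def reflA (n : ℕ) (i : Fin n) : Function.End (Fin n → ℤ) :=
  fun x k =>
    if k = i then
      -x i + ∑ j : Fin n, (if (i : ℕ) + 1 = (j : ℕ) ∨ (j : ℕ) + 1 = (i : ℕ) then x j else 0)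
    else x k

/-!
The reflection `sₚ` changes only the `p`-th simple-root coordinate, so `W_I` fixes every
coordinate outside `I` and preserves `π_I`. Conversely, if `π_I(α_{ij}) = π_I(α_{kl}) ≠ 0`, the
intervals `[i, j]` and `[k, l]` share a node outside `I` and differ only by nodes of `I` at either
end. Since `sᵢ α_{ij} = α_{i+1,j}` for `i < j` and `s_{j+1} α_{ij} = α_{i,j+1}`, the endpoints can
be moved one node of `I` at a time; the `sₚ` are involutions, so moves in both directions are
available.
-/

theorem sum_ite_adjacent {n p : ℕ} (hp : p < n) (f : ℕ → ℤ) :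
    ∑ j : Fin n, (if p + 1 = (j : ℕ) ∨ (j : ℕ) + 1 = p then f j else 0)
      = (if p + 1 < n then f (p + 1) else 0) + (if 0 < p then f (p - 1) else 0) := by
  rw [Fin.sum_univ_eq_sum_range (fun m => if p + 1 = m ∨ m + 1 = p then f m else 0)]
  have hsplit : ∀ m, (if p + 1 = m ∨ m + 1 = p then f m else 0) =
      (if p + 1 = m then f m else 0) + (if 0 < p then if p - 1 = m then f m else 0 else 0) := by
    intro m; split_ifs <;> omega
  simp only [hsplit, Finset.sum_add_distrib, Finset.sum_ite_eq, Finset.mem_range]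
  split_ifs <;> simp [show p - 1 < n by omega]

namespace Function.End

variable {α : Type*} (S : Set (Function.End α))

def ClosureOrbit (x y : α) : Prop :=
  ∃ w ∈ Submonoid.closure S, w x = y

variable {S}

theorem ClosureOrbit.refl (x : α) : ClosureOrbit S x x :=
  ⟨1, Submonoid.one_mem _, rfl⟩

theorem ClosureOrbit.trans {x y z : α} (hxy : ClosureOrbit S x y) (hyz : ClosureOrbit S y z) :
    ClosureOrbit S x z := by
  obtain ⟨v, hv, rfl⟩ := hxy
  obtain ⟨w, hw, rfl⟩ := hyz
  exact ⟨w * v, Submonoid.mul_mem _ hw hv, rfl⟩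

theorem closureOrbit_of_mem {s : Function.End α} (hs : s ∈ S) (x : α) : ClosureOrbit S x (s x) :=
  ⟨s, Submonoid.subset_closure hs, rfl⟩

theorem exists_mul_eq_one_of_mem_closure (hS : ∀ s ∈ S, s * s = 1) {w : Function.End α}
    (hw : w ∈ Submonoid.closure S) : ∃ w' ∈ Submonoid.closure S, w' * w = 1 := by
  induction hw using Submonoid.closure_induction with
  | mem s hs => exact ⟨s, Submonoid.subset_closure hs, hS s hs⟩
  | one => exact ⟨1, Submonoid.one_mem _, rfl⟩
  | mul u v _ _ hu hv =>
    obtain ⟨u', hu', hu'u⟩ := hu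
    obtain ⟨v', hv', hv'v⟩ := hv
    refine ⟨v' * u', Submonoid.mul_mem _ hv' hu', ?_⟩
    rw [mul_assoc, ← mul_assoc u', hu'u, one_mul, hv'v]

theorem ClosureOrbit.symm (hS : ∀ s ∈ S, s * s = 1) {x y : α} (hxy : ClosureOrbit S x y) :
    ClosureOrbit S y x := by
  obtain ⟨w, hw, rfl⟩ := hxy
  obtain ⟨w', hw', hw'w⟩ := exists_mul_eq_one_of_mem_closure hS hw
  exact ⟨w', hw', congrFun hw'w x⟩

end Function.End

open Function.End

section

variable {n : ℕ}

theorem alphaA_ne_zero_iff {i j : ℕ} {m : Fin n} : alphaA n i j m ≠ 0 ↔ i ≤ m ∧ (m : ℕ) ≤ j := by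
  unfold alphaA
  split_ifs <;> simp_all

theorem alphaA_apply_eq_iff {i j k l : ℕ} {m : Fin n} :
    alphaA n i j m = alphaA n k l m ↔ (i ≤ m ∧ (m : ℕ) ≤ j ↔ k ≤ m ∧ (m : ℕ) ≤ l) := by
  unfold alphaA
  split_ifs <;> simp <;> tauto

theorem reflA_apply_of_ne (p : Fin n) (x : Fin n → ℤ) {k : Fin n} (hk : k ≠ p) :
    reflA n p x k = x k :=
  if_neg hk

theorem reflA_apply_self (p : Fin n) (x : Fin n → ℤ) :
    reflA n p x p =
      -x p + ∑ j : Fin n, (if (p : ℕ) + 1 = (j : ℕ) ∨ (j : ℕ) + 1 = (p : ℕ) then x j else 0) :=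
  if_pos rfl

theorem reflA_mul_self (p : Fin n) : reflA n p * reflA n p = 1 := by
  funext x k
  change reflA n p (reflA n p x) k = x k
  by_cases hk : k = p
  · subst hk
    have hadj : ∀ j : Fin n, (k : ℕ) + 1 = j ∨ (j : ℕ) + 1 = k → reflA n k x j = x j :=
      fun j hj => reflA_apply_of_ne k x (fun h => by subst h; omega)
    rw [reflA_apply_self, reflA_apply_self,
      Finset.sum_congr rfl fun j _ => ite_congr rfl (hadj j) fun _ => rfl]
    ring
  · rw [reflA_apply_of_ne p _ hk, reflA_apply_of_ne p _ hk]

theorem reflA_alphaA_apply_self (i j : ℕ) (p : Fin n) :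
    reflA n p (alphaA n i j) p = -alphaA n i j p
      + ((if (p : ℕ) + 1 < n then if i ≤ (p : ℕ) + 1 ∧ (p : ℕ) + 1 ≤ j then 1 else 0 else 0)
        + (if 0 < (p : ℕ) then if i ≤ (p : ℕ) - 1 ∧ (p : ℕ) - 1 ≤ j then 1 else 0 else 0)) := by
  rw [reflA_apply_self, ← sum_ite_adjacent p.isLt fun m => if i ≤ m ∧ m ≤ j then 1 else 0]; rfl

theorem reflA_alphaA_left {i j : ℕ} (hij : i < j) (hjn : j < n) :
    reflA n ⟨i, by omega⟩ (alphaA n i j) = alphaA n (i + 1) j := by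
  funext k
  rcases eq_or_ne k ⟨i, by omega⟩ with rfl | hk
  · rw [reflA_alphaA_apply_self]
    simp only [alphaA]
    split_ifs <;> omega
  · rw [reflA_apply_of_ne _ _ hk]
    have : (k : ℕ) ≠ i := Fin.val_ne_of_ne hk
    simp only [alphaA]
    split_ifs <;> omega

theorem reflA_alphaA_right {i j : ℕ} (hij : i ≤ j) (hjn : j + 1 < n) :
    reflA n ⟨j + 1, hjn⟩ (alphaA n i j) = alphaA n i (j + 1) := by
  funext k
  rcases eq_or_ne k ⟨j + 1, hjn⟩ with rfl | hk
  · rw [reflA_alphaA_apply_self]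
    simp only [alphaA]
    split_ifs <;> omega
  · rw [reflA_apply_of_ne _ _ hk]
    have : (k : ℕ) ≠ j + 1 := Fin.val_ne_of_ne hk
    simp only [alphaA]
    split_ifs <;> omega

variable {I : Set (Fin n)}

theorem reflA_image_mul_self : ∀ s ∈ reflA n '' I, s * s = 1 := by
  rintro _ ⟨p, -, rfl⟩
  exact reflA_mul_self p

theorem closureOrbit_alphaA_left_of_le {a b j : ℕ} (hab : a ≤ b) (hbj : b ≤ j) (hjn : j < n)
    (hI : ∀ m : Fin n, a ≤ m → (m : ℕ) < b → m ∈ I) :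
    ClosureOrbit (reflA n '' I) (alphaA n a j) (alphaA n b j) := by
  induction b, hab using Nat.le_induction with
  | base => exact .refl _
  | succ b hab ih =>
    refine (ih (by omega) fun m h1 h2 => hI m h1 (by omega)).trans ?_
    rw [← reflA_alphaA_left (by omega) hjn]
    exact closureOrbit_of_mem (Set.mem_image_of_mem _ (hI ⟨b, by omega⟩ hab (by simp))) _

theorem closureOrbit_alphaA_right_of_le {i c d : ℕ} (hic : i ≤ c) (hcd : c ≤ d) (hdn : d < n)
    (hI : ∀ m : Fin n, c < m → (m : ℕ) ≤ d → m ∈ I) :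
    ClosureOrbit (reflA n '' I) (alphaA n i c) (alphaA n i d) := by
  induction d, hcd using Nat.le_induction with
  | base => exact .refl _
  | succ d hcd ih =>
    refine (ih (by omega) fun m h1 h2 => hI m h1 (by omega)).trans ?_
    rw [← reflA_alphaA_right (by omega) hdn]
    exact closureOrbit_of_mem (Set.mem_image_of_mem _ (hI ⟨d + 1, hdn⟩ (by simp; omega) le_rfl)) _

theorem closureOrbit_alphaA_left {i k j : ℕ} (hij : i ≤ j) (hkj : k ≤ j) (hjn : j < n)
    (hI : ∀ m : Fin n, m ∉ I → (m : ℕ) ≤ j → (i ≤ m ↔ k ≤ m)) :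
    ClosureOrbit (reflA n '' I) (alphaA n i j) (alphaA n k j) := by
  wlog hik : i ≤ k
  · exact (this hkj hij hjn (fun m hm hmj => (hI m hm hmj).symm) (by omega)).symm
      reflA_image_mul_self
  refine closureOrbit_alphaA_left_of_le hik hkj hjn fun m h1 h2 => ?_
  by_contra hm
  have := hI m hm (by omega)
  omega

theorem closureOrbit_alphaA_right {i j l : ℕ} (hij : i ≤ j) (hil : i ≤ l) (hjn : j < n)
    (hln : l < n) (hI : ∀ m : Fin n, m ∉ I → i ≤ (m : ℕ) → ((m : ℕ) ≤ j ↔ (m : ℕ) ≤ l)) :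
    ClosureOrbit (reflA n '' I) (alphaA n i j) (alphaA n i l) := by
  wlog hjl : j ≤ l
  · exact (this hil hij hln hjn (fun m hm hmi => (hI m hm hmi).symm) (by omega)).symm
      reflA_image_mul_self
  refine closureOrbit_alphaA_right_of_le hij hjl hln fun m h1 h2 => ?_
  by_contra hm
  have := hI m hm (by omega)
  omega

theorem apply_of_mem_closure_reflA {w : Function.End (Fin n → ℤ)}
    (hw : w ∈ Submonoid.closure (reflA n '' I)) (x : Fin n → ℤ) {m : Fin n} (hm : m ∉ I) :
    w x m = x m := by
  induction hw using Submonoid.closure_induction generalizing x with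
  | mem s hs =>
    obtain ⟨p, hp, rfl⟩ := hs
    exact reflA_apply_of_ne p x fun h => hm (h ▸ hp)
  | one => rfl
  | mul u v _ _ hu hv => exact (hu (v x)).trans (hv x)

end

theorem stmt2_general (n : ℕ) (I : Set (Fin n))
    (i j k l : ℕ) (hjn : j < n) (hln : l < n)
    -- the images under π_I are nonzero
    (hne1 : ∃ m : Fin n, m ∉ I ∧ alphaA n i j m ≠ 0) :
    (∀ m : Fin n, m ∉ I → alphaA n i j m = alphaA n k l m) ↔
      ∃ w ∈ Submonoid.closure (reflA n '' I), w (alphaA n i j) = alphaA n k l := by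
  constructor
  · intro h
    have hsupp : ∀ m : Fin n, m ∉ I → (i ≤ (m : ℕ) ∧ (m : ℕ) ≤ j ↔ k ≤ (m : ℕ) ∧ (m : ℕ) ≤ l) :=
      fun m hm => alphaA_apply_eq_iff.mp (h m hm)
    obtain ⟨m, hmI, hm⟩ := hne1
    have hm1 := alphaA_ne_zero_iff.mp hm
    have hm2 := (hsupp m hmI).mp hm1
    refine (closureOrbit_alphaA_left (by omega) (by omega) hjn fun m' hm' _ => ?_).trans
      (closureOrbit_alphaA_right (by omega) (by omega) hjn hln fun m' hm' _ => ?_)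
    all_goals have := hsupp m' hm'; omega
  · rintro ⟨w, hw, hwα⟩ m hm
    rw [← hwα, apply_of_mem_closure_reflA hw _ hm]

theorem stmt2 (n : ℕ) (I : Set (Fin n))
    (i j k l : ℕ) (hij : i ≤ j) (hjn : j < n) (hkl : k ≤ l) (hln : l < n)
    -- the images under π_I are nonzero
    (hne1 : ∃ m : Fin n, m ∉ I ∧ alphaA n i j m ≠ 0)
    (hne2 : ∃ m : Fin n, m ∉ I ∧ alphaA n k l m ≠ 0) :
    (∀ m : Fin n, m ∉ I → alphaA n i j m = alphaA n k l m) ↔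
      ∃ w ∈ Submonoid.closure (reflA n '' I), w (alphaA n i j) = alphaA n k l :=
  stmt2_general n I i j k l hjn hln hne1
end

section
/- Let Δ be a finite crystallographic root system, I ⊆ Δ, i ∉ I, and w = ℓ_I ℓ_{I+i}. Then the action of w on the root space h maps the span of {α_j : j ∈ ω_i(I)} isomorphically onto the span of {α_j : j ∈ I}, sending α_j to α_{ι_I ι_{I+i}(j)} for all j ∈ ω_i(I); consequently w induces a linear isomorphism M_i : h/span{α_j : j ∈ ω_i(I)} → h/span{α_j : j ∈ I}. -/
/-!
`ι_{I+i}` is an involution of `I ∪ {i}`, so it maps `ω_i(I) = (I ∪ {i}) \ {ι_{I+i}(i)}`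
bijectively onto `(I ∪ {i}) \ {i} = I`, and `ι_I` permutes `I`. Each of `ℓ_{I+i}` and `ℓ_I`
sends a simple root of its parabolic to a negated simple root, so the two signs cancel and
`w` carries the basis of `span{αⱼ : j ∈ ω_i(I)}` onto that of `span{αⱼ : j ∈ I}`;
an isomorphism mapping one subspace onto the other descends to the quotients.
-/

open Set

theorem Set.bijOn_of_mapsTo_of_involutive_on {α : Type*} {s : Set α} {σ : α → α}
    (hmaps : MapsTo σ s s) (hinv : ∀ x ∈ s, σ (σ x) = x) : BijOn σ s s :=
  InvOn.bijOn ⟨hinv, hinv⟩ hmaps hmaps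

theorem Set.bijOn_sdiff_singleton_of_involutive_on {α : Type*} {s : Set α} {σ : α → α}
    (hmaps : MapsTo σ s s) (hinv : ∀ x ∈ s, σ (σ x) = x) {a : α} (ha : a ∈ s) :
    BijOn σ (s \ {σ a}) (s \ {a}) := by
  simpa only [hinv a ha] using
    (bijOn_of_mapsTo_of_involutive_on hmaps hinv).sdiff_singleton (hmaps ha)

theorem Submodule.map_span_image_of_apply_eq {R M N ι : Type*} [Semiring R]
    [AddCommMonoid M] [AddCommMonoid N] [Module R M] [Module R N]
    (f : M →ₗ[R] N) {v : ι → M} {w : ι → N} {σ : ι → ι} {s : Set ι}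
    (h : ∀ j ∈ s, f (v j) = w (σ j)) :
    (span R (v '' s)).map f = span R (w '' (σ '' s)) := by
  rw [map_span, image_image, image_image]
  exact congrArg _ (image_congr h)

theorem stmt8_general {Δ : Type*} [DecidableEq Δ]
    (I : Set Δ) (i : Δ) (hi : i ∉ I)
    (ιI ιIi : Δ → Δ)
    -- ι_I and ι_{I+i} are involutions of I and of I ∪ {i}
    (hιI : ∀ j ∈ I, ιI j ∈ I) (hιIinv : ∀ j ∈ I, ιI (ιI j) = j)
    (hιIi : ∀ j ∈ I ∪ {i}, ιIi j ∈ I ∪ {i}) (hιIiinv : ∀ j ∈ I ∪ {i}, ιIi (ιIi j) = j)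
    (LI LIi : (Δ → ℝ) ≃ₗ[ℝ] (Δ → ℝ))
    -- ℓ_Γ sends the simple root αⱼ to -α_{ι_Γ(j)} for j ∈ Γ
    (hLI : ∀ j ∈ I, LI (Pi.single j 1) = -(Pi.single (ιI j) 1 : Δ → ℝ))
    (hLIi : ∀ j ∈ I ∪ {i}, LIi (Pi.single j 1) = -(Pi.single (ιIi j) 1 : Δ → ℝ)) :
    -- w sends αⱼ to α_{ι_I(ι_{I+i}(j))} ∈ span{αⱼ : j ∈ I} for j ∈ ω_i(I) ...
    (∀ j ∈ (I ∪ {i}) \ {ιIi i},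
        (LIi.trans LI) (Pi.single j 1) = (Pi.single (ιI (ιIi j)) 1 : Δ → ℝ) ∧
        ιI (ιIi j) ∈ I) ∧
    -- ... mapping span{αⱼ : j ∈ ω_i(I)} isomorphically onto span{αⱼ : j ∈ I} ...
    Submodule.map ((LIi.trans LI : (Δ → ℝ) ≃ₗ[ℝ] (Δ → ℝ)) :
          (Δ → ℝ) →ₗ[ℝ] (Δ → ℝ))
        (Submodule.span ℝ ((fun j => (Pi.single j 1 : Δ → ℝ)) '' ((I ∪ {i}) \ {ιIi i})))
      = Submodule.span ℝ ((fun j => (Pi.single j 1 : Δ → ℝ)) '' I) ∧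
    -- ... and hence induces an isomorphism M_i of the quotient spaces
    ∃ Mi : ((Δ → ℝ) ⧸ Submodule.span ℝ
              ((fun j => (Pi.single j 1 : Δ → ℝ)) '' ((I ∪ {i}) \ {ιIi i}))) ≃ₗ[ℝ]
           ((Δ → ℝ) ⧸ Submodule.span ℝ ((fun j => (Pi.single j 1 : Δ → ℝ)) '' I)),
      ∀ x : Δ → ℝ,
        Mi (Submodule.Quotient.mk x) = Submodule.Quotient.mk ((LIi.trans LI) x) := by
  have hιIi_bij : BijOn ιIi ((I ∪ {i}) \ {ιIi i}) I := by
    simpa only [union_singleton, insert_sdiff_self_of_notMem hi] using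
      bijOn_sdiff_singleton_of_involutive_on hιIi hιIiinv (mem_union_right I rfl)
  have hw_bij : BijOn (ιI ∘ ιIi) ((I ∪ {i}) \ {ιIi i}) I :=
    (bijOn_of_mapsTo_of_involutive_on hιI hιIinv).comp hιIi_bij
  have hw_single : ∀ j ∈ (I ∪ {i}) \ {ιIi i},
      (LIi.trans LI) (Pi.single j 1) = (Pi.single (ιI (ιIi j)) 1 : Δ → ℝ) := by
    intro j hj
    rw [LinearEquiv.trans_apply, hLIi j hj.1, map_neg, hLI _ (hιIi_bij.mapsTo hj), neg_neg]
  have hmap := Submodule.map_span_image_of_apply_eq (LIi.trans LI : (Δ → ℝ) →ₗ[ℝ] (Δ → ℝ))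
    (v := fun j => (Pi.single j 1 : Δ → ℝ)) (w := fun j => (Pi.single j 1 : Δ → ℝ))
    (σ := ιI ∘ ιIi) hw_single
  rw [hw_bij.image_eq] at hmap
  exact ⟨fun j hj => ⟨hw_single j hj, hw_bij.mapsTo hj⟩, hmap,
    Submodule.Quotient.equiv _ _ (LIi.trans LI) hmap, fun _ => rfl⟩

theorem stmt8 {Δ : Type*} [Fintype Δ] [DecidableEq Δ]
    (I : Set Δ) (i : Δ) (hi : i ∉ I)
    (ιI ιIi : Δ → Δ)
    -- ι_I and ι_{I+i} are involutions of I and of I ∪ {i}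
    (hιI : ∀ j ∈ I, ιI j ∈ I) (hιIinv : ∀ j ∈ I, ιI (ιI j) = j)
    (hιIi : ∀ j ∈ I ∪ {i}, ιIi j ∈ I ∪ {i}) (hιIiinv : ∀ j ∈ I ∪ {i}, ιIi (ιIi j) = j)
    (LI LIi : (Δ → ℝ) ≃ₗ[ℝ] (Δ → ℝ))
    -- ℓ_Γ sends the simple root αⱼ to -α_{ι_Γ(j)} for j ∈ Γ
    (hLI : ∀ j ∈ I, LI (Pi.single j 1) = -(Pi.single (ιI j) 1 : Δ → ℝ))
    (hLIi : ∀ j ∈ I ∪ {i}, LIi (Pi.single j 1) = -(Pi.single (ιIi j) 1 : Δ → ℝ))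
    -- ℓ_Γ ∈ W_Γ changes only the coordinates indexed by Γ
    (hLIfix : ∀ x, ∀ k ∉ I, LI x k = x k)
    (hLIifix : ∀ x, ∀ k ∉ I ∪ {i}, LIi x k = x k) :
    -- w sends αⱼ to α_{ι_I(ι_{I+i}(j))} ∈ span{αⱼ : j ∈ I} for j ∈ ω_i(I) ...
    (∀ j ∈ (I ∪ {i}) \ {ιIi i},
        (LIi.trans LI) (Pi.single j 1) = (Pi.single (ιI (ιIi j)) 1 : Δ → ℝ) ∧
        ιI (ιIi j) ∈ I) ∧
    -- ... mapping span{αⱼ : j ∈ ω_i(I)} isomorphically onto span{αⱼ : j ∈ I} ...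
    Submodule.map ((LIi.trans LI : (Δ → ℝ) ≃ₗ[ℝ] (Δ → ℝ)) :
          (Δ → ℝ) →ₗ[ℝ] (Δ → ℝ))
        (Submodule.span ℝ ((fun j => (Pi.single j 1 : Δ → ℝ)) '' ((I ∪ {i}) \ {ιIi i})))
      = Submodule.span ℝ ((fun j => (Pi.single j 1 : Δ → ℝ)) '' I) ∧
    -- ... and hence induces an isomorphism M_i of the quotient spaces
    ∃ Mi : ((Δ → ℝ) ⧸ Submodule.span ℝ
              ((fun j => (Pi.single j 1 : Δ → ℝ)) '' ((I ∪ {i}) \ {ιIi i}))) ≃ₗ[ℝ]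
           ((Δ → ℝ) ⧸ Submodule.span ℝ ((fun j => (Pi.single j 1 : Δ → ℝ)) '' I)),
      ∀ x : Δ → ℝ,
        Mi (Submodule.Quotient.mk x) = Submodule.Quotient.mk ((LIi.trans LI) x) :=
  stmt8_general I i hi ιI ιIi hιI hιIinv hιIi hιIiinv LI LIi hLI hLIi
end

section
/- With the notation above, the induced map M_i : h_{ω_i(I)} → h_I acts on the natural bases by e_k ↦ e_k + λ_k e_i for some non-negative integers λ_k when k ∉ I ∪ {i}, and e_i ↦ −e_i, where e_i ∈ h_{ω_i(I)} denotes the class of α_{ι_{I+i}(i)} and e_i ∈ h_I denotes the class of α_i. -/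
/-!
Coordinates outside `I ∪ {i}` are untouched by both `ℓ_{I+i}` and `ℓ_I`, so `w = ℓ_I ℓ_{I+i}`
sends `α_k` (for `k ∉ I ∪ {i}`) to a root whose `k`-th coordinate is `1`; since roots are
sign-coherent, all its coordinates are non-negative, in particular the `i`-th. For the second
claim, `ℓ_{I+i}` sends `α_{ι(i)}` to `-α_i`, and `ℓ_I` does not change coordinates outside `I`.
-/

lemma nonneg_of_signCoherent_of_pos {ι : Type*} {r : ι → ℤ}
    (hsign : (∀ j, 0 ≤ r j) ∨ ∀ j, r j ≤ 0) {k : ι} (hk : 0 < r k) (j : ι) : 0 ≤ r j := by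
  rcases hsign with hnonneg | hnonpos
  · exact hnonneg j
  · exact absurd (hnonpos k) hk.not_ge

lemma apply_apply_eq_of_fix_outside {ι M : Type*} {f g : (ι → M) → ι → M} {s t : Set ι}
    (hf : ∀ x, ∀ k ∉ s, f x k = x k) (hg : ∀ x, ∀ k ∉ t, g x k = x k)
    (x : ι → M) {k : ι} (hks : k ∉ s) (hkt : k ∉ t) : f (g x) k = x k := by
  rw [hf _ _ hks, hg _ _ hkt]

theorem stmt9_general {Δ : Type*} [DecidableEq Δ]
    (I : Set Δ) (i : Δ)
    (ιIi : Δ → Δ)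
    (hιIi : ∀ j ∈ I ∪ {i}, ιIi j ∈ I ∪ {i}) (hιIiinv : ∀ j ∈ I ∪ {i}, ιIi (ιIi j) = j)
    (LI LIi : (Δ → ℝ) ≃ₗ[ℝ] (Δ → ℝ))
    (hLIi : ∀ j ∈ I ∪ {i}, LIi (Pi.single j 1) = -(Pi.single (ιIi j) 1 : Δ → ℝ))
    -- ℓ_Γ ∈ W_Γ changes only the coordinates indexed by Γ
    (hLIfix : ∀ x, ∀ k ∉ I, LI x k = x k)
    (hLIifix : ∀ x, ∀ k ∉ I ∪ {i}, LIi x k = x k)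
    -- crystallographic condition: w maps each simple root to a root,
    -- i.e. to a sign-coherent integer vector
    (hroot : ∀ k : Δ, ∃ r : Δ → ℤ,
      (∀ j, (LIi.trans LI) (Pi.single k 1) j = (r j : ℝ)) ∧
      ((∀ j, 0 ≤ r j) ∨ (∀ j, r j ≤ 0))) :
    -- M_i (e_k) = e_k + λ_k e_i with λ_k a non-negative integer, for k ∉ I ∪ {i}
    (∀ k, k ∉ I ∪ {i} → ∃ lam : ℕ,
        (LIi.trans LI) (Pi.single k 1) i = (lam : ℝ) ∧
        ∀ j, j ∉ I → j ≠ i →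
          (LIi.trans LI) (Pi.single k 1) j = (Pi.single k 1 : Δ → ℝ) j) ∧
    -- M_i (e_i) = -e_i, where e_i on the source is the class of α_{ι_{I+i}(i)}
    (∀ j, j ∉ I →
        (LIi.trans LI) (Pi.single (ιIi i) 1) j = (-(Pi.single i 1 : Δ → ℝ)) j) := by
  have hfix : ∀ x, ∀ j ∉ I, j ≠ i → (LIi.trans LI) x j = x j := fun x j hjI hji =>
    apply_apply_eq_of_fix_outside hLIfix hLIifix x hjI (by simp [hjI, hji])
  have hii : i ∈ I ∪ {i} := Or.inr rfl
  refine ⟨fun k hk => ?_, fun j hjI => ?_⟩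
  · have hkI : k ∉ I := fun h => hk (Or.inl h)
    have hki : k ≠ i := fun h => hk (Or.inr h)
    obtain ⟨r, hr, hsign⟩ := hroot k
    have hrk : r k = 1 := by
      exact_mod_cast (hr k).symm.trans ((hfix _ k hkI hki).trans (Pi.single_eq_same k 1))
    refine ⟨(r i).toNat, ?_, fun j hjI hji => hfix _ j hjI hji⟩
    rw [hr i, ← Int.toNat_of_nonneg (nonneg_of_signCoherent_of_pos hsign (hrk ▸ one_pos) i)]
    exact Int.cast_natCast _
  · have hswap : LIi (Pi.single (ιIi i) 1) = -(Pi.single i 1 : Δ → ℝ) := by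
      rw [hLIi _ (hιIi i hii), hιIiinv i hii]
    rw [LinearEquiv.trans_apply, hswap, hLIfix _ _ hjI]

theorem stmt9 {Δ : Type*} [Fintype Δ] [DecidableEq Δ]
    (I : Set Δ) (i : Δ) (hi : i ∉ I)
    (ιIi : Δ → Δ)
    (hιIi : ∀ j ∈ I ∪ {i}, ιIi j ∈ I ∪ {i}) (hιIiinv : ∀ j ∈ I ∪ {i}, ιIi (ιIi j) = j)
    (LI LIi : (Δ → ℝ) ≃ₗ[ℝ] (Δ → ℝ))
    (hLIi : ∀ j ∈ I ∪ {i}, LIi (Pi.single j 1) = -(Pi.single (ιIi j) 1 : Δ → ℝ))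
    -- ℓ_Γ ∈ W_Γ changes only the coordinates indexed by Γ
    (hLIfix : ∀ x, ∀ k ∉ I, LI x k = x k)
    (hLIifix : ∀ x, ∀ k ∉ I ∪ {i}, LIi x k = x k)
    -- crystallographic condition: w maps each simple root to a root,
    -- i.e. to a sign-coherent integer vector
    (hroot : ∀ k : Δ, ∃ r : Δ → ℤ,
      (∀ j, (LIi.trans LI) (Pi.single k 1) j = (r j : ℝ)) ∧
      ((∀ j, 0 ≤ r j) ∨ (∀ j, r j ≤ 0))) :
    -- M_i (e_k) = e_k + λ_k e_i with λ_k a non-negative integer, for k ∉ I ∪ {i}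
    (∀ k, k ∉ I ∪ {i} → ∃ lam : ℕ,
        (LIi.trans LI) (Pi.single k 1) i = (lam : ℝ) ∧
        ∀ j, j ∉ I → j ≠ i →
          (LIi.trans LI) (Pi.single k 1) j = (Pi.single k 1 : Δ → ℝ) j) ∧
    -- M_i (e_i) = -e_i, where e_i on the source is the class of α_{ι_{I+i}(i)}
    (∀ j, j ∉ I →
        (LIi.trans LI) (Pi.single (ιIi i) 1) j = (-(Pi.single i 1 : Δ → ℝ)) j) :=
  stmt9_general I i ιIi hιIi hιIiinv LI LIi hLIi hLIfix hLIifix hroot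
end
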